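/- arXiv:2002.05573 — 2 statements merged into one kernel-verified Lean document; each statement's English description precedes it below -/
import Mathlib

section
/- Suppose ρ₂ : ℝ → ℝ is given by ρ₂(x) = −(1/(c²ω)) ∫_{−∞}^x sin(ω(x−y)) g(y) dy where g : ℝ → ℝ is continuous and integrable, c ≠ 0, and ω > 0. If ρ₂(x) → 0 as x → ∞, then ∫_{−∞}^∞ e^{−iωy} g(y) dy = 0. -/
open MeasureTheory Filter Real Topology

/-!
Expanding `sin (ω (x - y)) = sin (ω x) cos (ω y) - cos (ω x) sin (ω y)` writes `ρ₂ x` as a nonzero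
multiple of `sin (ω x) F x - cos (ω x) G x`, where `F`, `G` are the partial integrals over `Iic x`
of `cos (ω y) g y` and `sin (ω y) g y`. These converge to the full integrals `A`, `B`, so
`ρ₂ → 0` forces the periodic function `A sin (ω x) - B cos (ω x)` to tend to `0`, hence to vanish
identically; evaluating at `0` and `π / (2 ω)` gives `A = B = 0`, i.e. the Fourier transform of `g`
vanishes at `ω`.
-/

theorem tendsto_setIntegral_Iic_atTop {E : Type*} [NormedAddCommGroup E] [NormedSpace ℝ E]
    {μ : Measure ℝ} {f : ℝ → E} (hf : Integrable f μ) :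
    Tendsto (fun x => ∫ y in Set.Iic x, f y ∂μ) atTop (𝓝 (∫ y, f y ∂μ)) := by
  have h := tendsto_setIntegral_of_monotone (μ := μ) (fun x : ℝ => measurableSet_Iic)
    (fun _ _ hab => Set.Iic_subset_Iic.2 hab) (by rw [Set.iUnion_Iic]; exact hf.integrableOn)
  rwa [Set.iUnion_Iic, setIntegral_univ] at h

theorem Function.Periodic.eq_of_tendsto_atTop {α : Type*} [TopologicalSpace α] [T2Space α]
    {f : ℝ → α} {T : ℝ} {L : α} (hf : Function.Periodic f T) (hT : T ≠ 0)
    (h : Tendsto f atTop (𝓝 L)) (x : ℝ) : f x = L := by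
  have hf' : Function.Periodic f |T| := by
    rcases abs_choice T with hT' | hT' <;> rw [hT']
    exacts [hf, hf.neg]
  have hx : Tendsto (fun n : ℕ => x + n * |T|) atTop atTop :=
    tendsto_atTop_add_const_left _ _
      (tendsto_natCast_atTop_atTop.atTop_mul_const (abs_pos.2 hT))
  refine tendsto_nhds_unique tendsto_const_nhds ((h.comp hx).congr fun n => ?_)
  exact hf'.nat_mul n x

theorem eq_zero_of_tendsto_sin_mul_sub_cos_mul {F G : ℝ → ℝ} {A B ω : ℝ} (hω : ω ≠ 0)
    (hF : Tendsto F atTop (𝓝 A)) (hG : Tendsto G atTop (𝓝 B))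
    (h : Tendsto (fun x => sin (ω * x) * F x - cos (ω * x) * G x) atTop (𝓝 0)) :
    A = 0 ∧ B = 0 := by
  set p : ℝ → ℝ := fun x => sin (ω * x) * A - cos (ω * x) * B with hp
  have hp_periodic : Function.Periodic p (ω⁻¹ * (2 * π)) := fun x => by
    simp only [hp, mul_add, mul_inv_cancel_left₀ hω, sin_add_two_pi, cos_add_two_pi]
  have bdd : ∀ u : ℝ → ℝ, (∀ x, |u x| ≤ 1) → IsBoundedUnder (· ≤ ·) atTop (norm ∘ u) :=
    fun u hu => isBoundedUnder_of ⟨1, fun x => hu x⟩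
  have herr : Tendsto (fun x => sin (ω * x) * (F x - A) - cos (ω * x) * (G x - B))
      atTop (𝓝 0) := by
    simpa using (isBoundedUnder_le_mul_tendsto_zero (bdd _ fun x => abs_sin_le_one (ω * x))
      (tendsto_sub_nhds_zero_iff.2 hF)).sub
      (isBoundedUnder_le_mul_tendsto_zero (bdd _ fun x => abs_cos_le_one (ω * x))
      (tendsto_sub_nhds_zero_iff.2 hG))
  have hp_lim : Tendsto p atTop (𝓝 0) := by
    simpa using (h.sub herr).congr fun x => by simp only [hp]; ring
  have hp_zero := hp_periodic.eq_of_tendsto_atTop (by positivity) hp_lim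
  constructor
  · simpa [hp, mul_inv_cancel_left₀ hω] using hp_zero (ω⁻¹ * (π / 2))
  · simpa [hp] using hp_zero 0

section Trigonometric

variable {μ : Measure ℝ} {g : ℝ → ℝ}

theorem MeasureTheory.Integrable.cos_mul (hg : Integrable g μ) (ω : ℝ) :
    Integrable (fun y => cos (ω * y) * g y) μ :=
  hg.bdd_mul (by fun_prop) (c := 1) (.of_forall fun y => abs_cos_le_one _)

theorem MeasureTheory.Integrable.sin_mul (hg : Integrable g μ) (ω : ℝ) :
    Integrable (fun y => sin (ω * y) * g y) μ :=
  hg.bdd_mul (by fun_prop) (c := 1) (.of_forall fun y => abs_sin_le_one _)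

theorem setIntegral_sin_mul_sub_mul (hg : Integrable g μ) (s : Set ℝ) (ω x : ℝ) :
    ∫ y in s, sin (ω * (x - y)) * g y ∂μ =
      sin (ω * x) * (∫ y in s, cos (ω * y) * g y ∂μ) -
        cos (ω * x) * ∫ y in s, sin (ω * y) * g y ∂μ := by
  have hexpand : ∀ y, sin (ω * (x - y)) * g y =
      sin (ω * x) * (cos (ω * y) * g y) - cos (ω * x) * (sin (ω * y) * g y) := fun y => by
    rw [mul_sub, sin_sub]; ring
  simp only [hexpand]
  rw [integral_sub ((hg.cos_mul ω).integrableOn.const_mul _)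
    ((hg.sin_mul ω).integrableOn.const_mul _), integral_const_mul, integral_const_mul]

theorem integral_exp_neg_I_mul_mul_ofReal (hg : Integrable g μ) (ω : ℝ) :
    ∫ y, Complex.exp (-(Complex.I * ω * y)) * (g y : ℂ) ∂μ =
      ((∫ y, cos (ω * y) * g y ∂μ : ℝ) : ℂ) - ((∫ y, sin (ω * y) * g y ∂μ : ℝ) : ℂ) * Complex.I := by
  have hexpand : ∀ y : ℝ, Complex.exp (-(Complex.I * ω * y)) * (g y : ℂ) =
      ((cos (ω * y) * g y : ℝ) : ℂ) - ((sin (ω * y) * g y : ℝ) : ℂ) * Complex.I := fun y => by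
    rw [show -(Complex.I * ω * y) = ((-(ω * y) : ℝ) : ℂ) * Complex.I by push_cast; ring,
      Complex.exp_mul_I, ← Complex.ofReal_cos, ← Complex.ofReal_sin, cos_neg, sin_neg]
    push_cast
    ring
  simp only [hexpand]
  rw [integral_sub (hg.cos_mul ω).ofReal ((hg.sin_mul ω).ofReal.mul_const _),
    integral_mul_const, integral_complex_ofReal, integral_complex_ofReal]

end Trigonometric

theorem antiresonance_necessary_general (c ω : ℝ) (hc : c ≠ 0) (hω : 0 < ω)
    (g : ℝ → ℝ) (hgi : Integrable g) (ρ₂ : ℝ → ℝ)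
    (hρ : ∀ x : ℝ, ρ₂ x =
      -(1 / (c^2 * ω)) * ∫ y in Set.Iic x, Real.sin (ω * (x - y)) * g y)
    (hlim : Filter.Tendsto ρ₂ Filter.atTop (nhds 0)) :
    ∫ y : ℝ, Complex.exp (-(Complex.I * ω * y)) * (g y : ℂ) = 0 := by
  set K : ℝ := -(1 / (c ^ 2 * ω))
  have hK : K ≠ 0 := by simp [K, hc, hω.ne']
  have hcomb : Tendsto (fun x => sin (ω * x) * (∫ y in Set.Iic x, cos (ω * y) * g y) -
      cos (ω * x) * ∫ y in Set.Iic x, sin (ω * y) * g y) atTop (𝓝 0) := by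
    have h := hlim.const_mul K⁻¹
    rw [mul_zero] at h
    refine h.congr fun x => ?_
    rw [hρ x, setIntegral_sin_mul_sub_mul hgi, inv_mul_cancel_left₀ hK]
  obtain ⟨hA, hB⟩ := eq_zero_of_tendsto_sin_mul_sub_cos_mul hω.ne'
    (tendsto_setIntegral_Iic_atTop (hgi.cos_mul ω))
    (tendsto_setIntegral_Iic_atTop (hgi.sin_mul ω)) hcomb
  rw [integral_exp_neg_I_mul_mul_ofReal hgi, hA, hB]
  simp

theorem antiresonance_necessary (c ω : ℝ) (hc : c ≠ 0) (hω : 0 < ω)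
    (g : ℝ → ℝ) (hgc : Continuous g) (hgi : Integrable g) (ρ₂ : ℝ → ℝ)
    (hρ : ∀ x : ℝ, ρ₂ x =
      -(1 / (c^2 * ω)) * ∫ y in Set.Iic x, Real.sin (ω * (x - y)) * g y)
    (hlim : Filter.Tendsto ρ₂ Filter.atTop (nhds 0)) :
    ∫ y : ℝ, Complex.exp (-(Complex.I * ω * y)) * (g y : ℂ) = 0 :=
  antiresonance_necessary_general c ω hc hω g hgi ρ₂ hρ hlim
end

section
/- Let c ≠ 0, μ, κ > 0 satisfy ω := √(κ(1+μ)/(c²μ)) = 2nπ for some positive integer n, and let V be C¹. Suppose ρ₁, ρ₂ are smooth rapidly decaying real functions satisfying the pair ρ₂ = Σ V'(ρ₁) (where Σ is the Fourier multiplier with symbol 2iμ sin(ξ/2)/(c²μξ² − κ(1+μ))) and c²ρ₁'' − δ²V'(ρ₁) − κδρ₂ = 0, with δf(x) = f(x+1/2) − f(x−1/2). Then ρ₁, ρ₂ satisfy the full traveling wave system: c²ρ₁'' − δ²V'(ρ₁) − κδρ₂ = 0 and c²μρ₂'' + κ(1+μ)ρ₂ + μδV'(ρ₁) = 0. -/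
open MeasureTheory

/-- The centered difference operator `δf(x) = f(x+1/2) − f(x−1/2)`. -/
noncomputable def cdiff (f : ℝ → ℝ) (x : ℝ) : ℝ := f (x + 1/2) - f (x - 1/2)

/-- The Fourier transform `ĥ(ξ) = ∫ e^{−iξx} h(x) dx`. -/
noncomputable def FT (h : ℝ → ℂ) (ξ : ℝ) : ℂ :=
  ∫ x : ℝ, Complex.exp (-(Complex.I * ξ * x)) * h x

open FourierTransform Real Complex in
lemma FT_eq_fourierIntegral (h : ℝ → ℂ) (ξ : ℝ) :
    FT h ξ = 𝓕 h (ξ / (2 * Real.pi)) := by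
  rw [Real.fourier_eq']
  unfold FT
  congr 1
  ext x
  rw [smul_eq_mul]
  congr 2
  simp only [RCLike.inner_apply, conj_trivial]
  have : (-2 * Real.pi * (ξ / (2 * Real.pi) * x)) = -(ξ * x) := by rw [mul_comm (ξ / _) x]; field_simp
  rw [this]
  push_cast
  ring

lemma integrable_mulexp {f : ℝ → ℂ} (hf : Integrable f) (ξ : ℝ) :
    Integrable (fun x : ℝ => Complex.exp (-(Complex.I * ξ * x)) * f x) := by
  refine hf.bdd_mul (c := 1) ?_ (Filter.Eventually.of_forall fun x => ?_)
  · exact (Complex.continuous_exp.comp (by continuity)).aestronglyMeasurable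
  · rw [Complex.norm_exp]
    simp

lemma FT_sub {f g : ℝ → ℂ} (hf : Integrable f) (hg : Integrable g) (ξ : ℝ) :
    FT (fun x => f x - g x) ξ = FT f ξ - FT g ξ := by
  unfold FT
  simp_rw [mul_sub]
  exact integral_sub (integrable_mulexp hf ξ) (integrable_mulexp hg ξ)

lemma FT_comb {f g h : ℝ → ℂ} (a b d : ℂ) (hf : Integrable f) (hg : Integrable g)
    (hh : Integrable h) (ξ : ℝ) :
    FT (fun x => a * f x + b * g x + d * h x) ξ
      = a * FT f ξ + b * FT g ξ + d * FT h ξ := by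
  unfold FT
  have key : ∀ x : ℝ, Complex.exp (-(Complex.I * ξ * x)) * (a * f x + b * g x + d * h x)
      = a * (Complex.exp (-(Complex.I * ξ * x)) * f x)
        + b * (Complex.exp (-(Complex.I * ξ * x)) * g x)
        + d * (Complex.exp (-(Complex.I * ξ * x)) * h x) := fun x => by ring
  simp_rw [key]
  have ia : Integrable (fun x : ℝ => a * (Complex.exp (-(Complex.I * ξ * x)) * f x)) :=
    (integrable_mulexp hf ξ).const_mul a
  have ib : Integrable (fun x : ℝ => b * (Complex.exp (-(Complex.I * ξ * x)) * g x)) :=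
    (integrable_mulexp hg ξ).const_mul b
  have id' : Integrable (fun x : ℝ => d * (Complex.exp (-(Complex.I * ξ * x)) * h x)) :=
    (integrable_mulexp hh ξ).const_mul d
  have iab : Integrable (fun x : ℝ => a * (Complex.exp (-(Complex.I * ξ * x)) * f x)
      + b * (Complex.exp (-(Complex.I * ξ * x)) * g x)) := ia.add ib
  rw [integral_add iab id', integral_add ia ib,
    integral_const_mul, integral_const_mul, integral_const_mul]

open FourierTransform Real Complex in
lemma FT_deriv {f : ℝ → ℂ} (hf : Integrable f) (h'f : Differentiable ℝ f)
    (hf' : Integrable (deriv f)) (ξ : ℝ) :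
    FT (deriv f) ξ = Complex.I * ξ * FT f ξ := by
  have hπ : (Real.pi : ℂ) ≠ 0 := by exact_mod_cast Real.pi_ne_zero
  have key := Real.fourier_deriv hf h'f hf'
  rw [FT_eq_fourierIntegral, FT_eq_fourierIntegral, key]
  simp only [smul_eq_mul]
  push_cast
  field_simp

lemma FT_translate {f : ℝ → ℂ} (a ξ : ℝ) :
    FT (fun x => f (x + a)) ξ = Complex.exp (Complex.I * ξ * a) * FT f ξ := by
  unfold FT
  have h1 : ∀ x : ℝ, Complex.exp (-(Complex.I * ξ * x)) * f (x + a)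
      = (fun y : ℝ => Complex.exp (Complex.I * ξ * a) *
          (Complex.exp (-(Complex.I * ξ * y)) * f y)) (x + a) := by
    intro x
    simp only
    rw [← mul_assoc, ← Complex.exp_add]
    push_cast
    ring_nf
  simp_rw [h1]
  rw [MeasureTheory.integral_add_right_eq_self
    (fun y : ℝ => Complex.exp (Complex.I * ξ * a) *
      (Complex.exp (-(Complex.I * ξ * y)) * f y)) a]
  exact integral_const_mul _ _

open FourierTransform Real Complex in
theorem reduction_recovers_full_system (c μ κ : ℝ) (hc : c ≠ 0) (hμ : 0 < μ)
    (hκ : 0 < κ) (n : ℕ) (hn : 1 ≤ n)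
    (hanti : Real.sqrt (κ * (1 + μ) / (c^2 * μ)) = 2 * n * Real.pi)
    (Vp : ℝ → ℝ) (hVp : Continuous Vp)
    (ρ₁ ρ₂ : ℝ → ℝ) (hρ₁ : ContDiff ℝ (⊤ : ℕ∞) ρ₁) (hρ₂ : ContDiff ℝ (⊤ : ℕ∞) ρ₂)
    (hiV : Integrable (fun x => Vp (ρ₁ x)))
    (hiρ₂ : Integrable ρ₂) (hiρ₂' : Integrable (deriv ρ₂))
    (hiρ₂'' : Integrable (deriv (deriv ρ₂)))
    -- `ρ₂ = Σ V'(ρ₁)` expressed on the Fourier side: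
    (hSigma : ∀ ξ : ℝ,
      ((-(c^2 * μ * ξ^2) + κ * (1 + μ) : ℝ) : ℂ) * FT (fun x => (ρ₂ x : ℂ)) ξ +
        2 * Complex.I * μ * Complex.sin (ξ / 2) *
          FT (fun x => (Vp (ρ₁ x) : ℂ)) ξ = 0)
    (heq1 : ∀ x : ℝ,
      c^2 * deriv (deriv ρ₁) x - cdiff (cdiff (fun y => Vp (ρ₁ y))) x -
        κ * cdiff ρ₂ x = 0) :
    (∀ x : ℝ,
      c^2 * deriv (deriv ρ₁) x - cdiff (cdiff (fun y => Vp (ρ₁ y))) x -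
        κ * cdiff ρ₂ x = 0) ∧
    (∀ x : ℝ,
      c^2 * μ * deriv (deriv ρ₂) x + κ * (1 + μ) * ρ₂ x +
        μ * cdiff (fun y => Vp (ρ₁ y)) x = 0) := by
  refine ⟨heq1, ?_⟩
  -- complexified functions
  set f₂ : ℝ → ℂ := fun x => (ρ₂ x : ℂ) with hf₂def
  set fV : ℝ → ℂ := fun x => (Vp (ρ₁ x) : ℂ) with hfVdef
  have hinfty : ContDiff ℝ (⊤ : ℕ∞) ρ₂ := hρ₂.of_le (by simp)
  have hρ₂diff : Differentiable ℝ ρ₂ := (contDiff_infty_iff_deriv.mp hinfty).1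
  have hρ₂' : ContDiff ℝ (⊤ : ℕ∞) (deriv ρ₂) := (contDiff_infty_iff_deriv.mp hinfty).2
  have hρ₂'diff : Differentiable ℝ (deriv ρ₂) := (contDiff_infty_iff_deriv.mp hρ₂').1
  have hρ₂'' : ContDiff ℝ (⊤ : ℕ∞) (deriv (deriv ρ₂)) := (contDiff_infty_iff_deriv.mp hρ₂').2
  -- derivatives of the complexification
  have hd1 : deriv f₂ = fun x => ((deriv ρ₂ x : ℝ) : ℂ) := by
    funext x
    exact ((hρ₂diff x).hasDerivAt.ofReal_comp).deriv
  have hd2 : deriv (deriv f₂) = fun x => ((deriv (deriv ρ₂) x : ℝ) : ℂ) := by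
    rw [hd1]
    funext x
    exact ((hρ₂'diff x).hasDerivAt.ofReal_comp).deriv
  have hf₂int : Integrable f₂ := hiρ₂.ofReal
  have hf₂'int : Integrable (deriv f₂) := by rw [hd1]; exact hiρ₂'.ofReal
  have hf₂''int : Integrable (deriv (deriv f₂)) := by rw [hd2]; exact hiρ₂''.ofReal
  have hf₂d : Differentiable ℝ f₂ := fun x => ((hρ₂diff x).hasDerivAt.ofReal_comp).differentiableAt
  have hf₂'d : Differentiable ℝ (deriv f₂) := by
    rw [hd1]
    exact fun x => ((hρ₂'diff x).hasDerivAt.ofReal_comp).differentiableAt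
  have hfVint : Integrable fV := hiV.ofReal
  -- Fourier transform of the second derivative
  have hFT2 : ∀ ξ : ℝ, FT (deriv (deriv f₂)) ξ
      = Complex.I * ξ * (Complex.I * ξ * FT f₂ ξ) := by
    intro ξ
    rw [FT_deriv hf₂'int hf₂'d hf₂''int ξ, FT_deriv hf₂int hf₂d hf₂'int ξ]
  -- integrability of the translates
  have h1 : Integrable (fun x : ℝ => fV (x + 1/2)) := hfVint.comp_add_right _
  have h2 : Integrable (fun x : ℝ => fV (x - 1/2)) := by
    simpa [sub_eq_add_neg] using hfVint.comp_add_right (-(1/2 : ℝ))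
  have h12 : Integrable (fun x : ℝ => fV (x + 1/2) - fV (x - 1/2)) := h1.sub h2
  -- Fourier transform of the centered difference
  have hFTd : ∀ ξ : ℝ, FT (fun x => fV (x + 1/2) - fV (x - 1/2)) ξ
      = 2 * Complex.I * Complex.sin (ξ / 2) * FT fV ξ := by
    intro ξ
    rw [FT_sub h1 h2 ξ]
    have e1 := FT_translate (f := fV) (1/2) ξ
    have e2 : FT (fun x => fV (x - 1/2)) ξ
        = Complex.exp (Complex.I * ξ * ((-(1/2) : ℝ) : ℂ)) * FT fV ξ := by
      simpa [sub_eq_add_neg] using FT_translate (f := fV) (-(1/2)) ξ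
    rw [e1, e2, Complex.sin]
    push_cast
    ring_nf
    rw [Complex.I_sq]
    ring
  -- the function expressing the second equation
  set G : ℝ → ℂ := fun x => ((c^2 * μ : ℝ) : ℂ) * deriv (deriv f₂) x
      + ((κ * (1 + μ) : ℝ) : ℂ) * f₂ x
      + ((μ : ℝ) : ℂ) * (fV (x + 1/2) - fV (x - 1/2)) with hGdef
  have hGint : Integrable G := by
    exact ((hf₂''int.const_mul _).add (hf₂int.const_mul _)).add (h12.const_mul _)
  have hGcont : Continuous G := by
    have hfVc : Continuous fV := Complex.continuous_ofReal.comp (hVp.comp hρ₁.continuous)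
    apply Continuous.add
    apply Continuous.add
    · rw [hd2]
      exact continuous_const.mul (Complex.continuous_ofReal.comp hρ₂''.continuous)
    · exact continuous_const.mul (Complex.continuous_ofReal.comp hinfty.continuous)
    · exact continuous_const.mul
        ((hfVc.comp (by continuity)).sub (hfVc.comp (by continuity)))
  -- FT of G vanishes
  have hFTG : ∀ ξ : ℝ, FT G ξ = 0 := by
    intro ξ
    have key := FT_comb (f := deriv (deriv f₂)) (g := f₂)
      (h := fun x => fV (x + 1/2) - fV (x - 1/2))
      ((c^2 * μ : ℝ) : ℂ) ((κ * (1 + μ) : ℝ) : ℂ) ((μ : ℝ) : ℂ)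
      hf₂''int hf₂int h12 ξ
    rw [hGdef, key, hFT2 ξ, hFTd ξ]
    have hs := hSigma ξ
    have hA : FT (fun x => (ρ₂ x : ℂ)) ξ = FT f₂ ξ := rfl
    have hB : FT (fun x => (Vp (ρ₁ x) : ℂ)) ξ = FT fV ξ := rfl
    rw [hA, hB] at hs
    push_cast at hs ⊢
    linear_combination hs + ((c : ℂ)^2 * (μ : ℂ) * (ξ : ℂ)^2 * FT f₂ ξ) * Complex.I_sq
  -- hence 𝓕 G = 0
  have h𝓕G : 𝓕 G = 0 := by
    funext ξ
    have h2π : (2 : ℝ) * Real.pi ≠ 0 := by positivity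
    have key := FT_eq_fourierIntegral G (2 * Real.pi * ξ)
    rw [hFTG] at key
    have hξ : 2 * Real.pi * ξ / (2 * Real.pi) = ξ := by field_simp
    rw [hξ] at key
    simpa using key.symm
  -- Fourier inversion gives G = 0
  have hG0 : ∀ x : ℝ, G x = 0 := by
    have hinv := hGcont.fourierInv_fourier_eq hGint (by rw [h𝓕G]; exact integrable_zero _ _ _)
    rw [h𝓕G] at hinv
    intro x
    have hz : 𝓕⁻ (0 : ℝ → ℂ) x = 0 := by
      rw [Real.fourierInv_eq]
      simp
    calc G x = 𝓕⁻ (0 : ℝ → ℂ) x := by rw [hinv]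
    _ = 0 := hz
  -- conclude
  intro x
  have h := hG0 x
  rw [hGdef] at h
  simp only [hd2] at h
  have h' : ((c^2 * μ * deriv (deriv ρ₂) x + κ * (1 + μ) * ρ₂ x
      + μ * (Vp (ρ₁ (x + 1/2)) - Vp (ρ₁ (x - 1/2))) : ℝ) : ℂ) = 0 := by
    push_cast
    convert h using 1
    push_cast
    ring
  have h'' : c^2 * μ * deriv (deriv ρ₂) x + κ * (1 + μ) * ρ₂ x
      + μ * (Vp (ρ₁ (x + 1/2)) - Vp (ρ₁ (x - 1/2))) = 0 := by exact_mod_cast h'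
  simp only [cdiff]
  linarith
end
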